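/- If a is an ideal of S containing p and δ is a p-derivation on S, then δ(a^n) ⊆ a^{n−1} for all n ≥ 1. In particular, a^n ⊆ a^{⟨n⟩_p} := { f ∈ S : δ^i(f) ∈ a for all 0 ≤ i ≤ n−1 }. -/

import Mathlib

/-!
Write `φ x = x ^ p + p * δ x`. Since `p` is a nonzerodivisor, multiplicativity and additivity of `φ`
give `δ (x * y) = x ^ p * δ y + y ^ p * δ x + p * δ x * δ y` and `δ (x + y) = δ x + δ y - x * y * r`,
the latter because `(x + y) ^ p - x ^ p - y ^ p ∈ p * x * y * S`. Inducting on `n`, the product rule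
sends `a ^ (n + 1) * a` into `a ^ (n + 1)` (the term `p * δ i * δ j` is where `p ∈ a` enters), and the
sum rule shows that the elements of `a ^ (n + 2)` mapped into `a ^ (n + 1)` form an additive subgroup.
-/

def IsPDerivation {S : Type*} [CommRing S] (p : ℕ) (δ : S → S) : Prop :=
  ∃ φ : S →+* S, ∀ x, φ x = x ^ p + p * δ x

namespace IsPDerivation

variable {S : Type*} [CommRing S] {p : ℕ} {δ : S → S}

theorem map_mul (hδ : IsPDerivation p δ) (hreg : ∀ x : S, (p : S) * x = 0 → x = 0) (x y : S) :
    δ (x * y) = x ^ p * δ y + y ^ p * δ x + p * δ x * δ y := by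
  obtain ⟨φ, hφ⟩ := hδ
  rw [← sub_eq_zero]
  apply hreg
  have hxy := hφ (x * y)
  rw [_root_.map_mul, hφ, hφ] at hxy
  linear_combination -hxy

theorem exists_map_add (hδ : IsPDerivation p δ) (hreg : ∀ x : S, (p : S) * x = 0 → x = 0)
    (hp : p.Prime) (x y : S) : ∃ r, δ (x + y) = δ x + δ y - x * y * r := by
  obtain ⟨φ, hφ⟩ := hδ
  obtain ⟨r, hr⟩ := exists_add_pow_prime_eq hp x y
  refine ⟨r, ?_⟩
  rw [← sub_eq_zero]
  apply hreg
  have hxy := hφ (x + y)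
  rw [_root_.map_add, hφ, hφ] at hxy
  linear_combination -hxy - hr

theorem map_add_mem (hδ : IsPDerivation p δ) (hreg : ∀ x : S, (p : S) * x = 0 → x = 0)
    (hp : p.Prime) {J : Ideal S} {x y : S} (hx : x ∈ J) (hδx : δ x ∈ J) (hδy : δ y ∈ J) :
    δ (x + y) ∈ J := by
  obtain ⟨r, hr⟩ := hδ.exists_map_add hreg hp x y
  rw [hr, mul_assoc]
  exact sub_mem (add_mem hδx hδy) (J.mul_mem_right _ hx)

theorem map_mul_mem_pow (hδ : IsPDerivation p δ) (hreg : ∀ x : S, (p : S) * x = 0 → x = 0)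
    (hp : p.Prime) {a : Ideal S} (hpa : (p : S) ∈ a) {n : ℕ} {i j : S} (hi : i ∈ a ^ (n + 1))
    (hδi : δ i ∈ a ^ n) (hj : j ∈ a) : δ (i * j) ∈ a ^ (n + 1) := by
  have hip : i ^ p ∈ a ^ (n + 1) := Ideal.pow_mem_of_mem _ hi p hp.pos
  have hjp : j ^ p ∈ a := Ideal.pow_mem_of_mem _ hj p hp.pos
  rw [hδ.map_mul hreg]
  refine add_mem (add_mem (Ideal.mul_mem_right _ _ hip) ?_) ?_ <;> rw [pow_succ']
  · exact Ideal.mul_mem_mul hjp hδi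
  · exact Ideal.mul_mem_right _ _ (Ideal.mul_mem_mul hpa hδi)

theorem map_mem_pow_of_mem_pow_succ (hδ : IsPDerivation p δ)
    (hreg : ∀ x : S, (p : S) * x = 0 → x = 0) (hp : p.Prime) {a : Ideal S} (hpa : (p : S) ∈ a)
    (n : ℕ) : ∀ x ∈ a ^ (n + 1), δ x ∈ a ^ n := by
  induction n with
  | zero => simp
  | succ n ih =>
    intro x hx
    rw [pow_succ a (n + 1)] at hx
    induction hx using Submodule.mul_induction_on' with
    | mem_mul_mem i hi j hj => exact hδ.map_mul_mem_pow hreg hp hpa hi (ih i hi) hj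
    | add x hx y hy hδx hδy =>
      exact hδ.map_add_mem hreg hp (Ideal.mul_le_left hx) hδx hδy

theorem iterate_mem_pow (hδ : IsPDerivation p δ) (hreg : ∀ x : S, (p : S) * x = 0 → x = 0)
    (hp : p.Prime) {a : Ideal S} (hpa : (p : S) ∈ a) (n : ℕ) :
    ∀ i : ℕ, ∀ x ∈ a ^ (n + i), δ^[i] x ∈ a ^ n
  | 0, x, hx => hx
  | i + 1, x, hx => by
    rw [Function.iterate_succ_apply]
    exact iterate_mem_pow hδ hreg hp hpa n i _
      (hδ.map_mem_pow_of_mem_pow_succ hreg hp hpa _ x (by rwa [← add_assoc] at hx))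

end IsPDerivation

/-- if p ∈ a then δ(a^n) ⊆ a^{n-1}; in particular a^n ⊆ a^{⟨n⟩_p}. -/
theorem stmt_8 (p : ℕ) (hp : p.Prime) (S : Type*) [CommRing S]
    (hpnzd : ∀ x : S, (p : S) * x = 0 → x = 0)
    (δ : S → S) (hδ : ∃ φ : S →+* S, ∀ x : S, φ x = x ^ p + p * δ x)
    (a : Ideal S) (hpa : (p : S) ∈ a) :
    (∀ n : ℕ, 1 ≤ n → ∀ x ∈ a ^ n, δ x ∈ a ^ (n - 1)) ∧
    (∀ n : ℕ, ∀ x ∈ a ^ n, ∀ i < n, δ^[i] x ∈ a) := by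
  have hδ' : IsPDerivation p δ := hδ
  refine ⟨fun n hn x hx => ?_, fun n x hx i hi => ?_⟩
  · obtain ⟨m, rfl⟩ := Nat.exists_eq_add_of_le' hn
    exact hδ'.map_mem_pow_of_mem_pow_succ hpnzd hp hpa m x hx
  · have hx' : x ∈ a ^ (1 + i) := Ideal.pow_le_pow_right (by omega) hx
    simpa using hδ'.iterate_mem_pow hpnzd hp hpa 1 i x hx'
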